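/- arXiv:1906.07754 — 3 statements merged into one kernel-verified Lean document; each statement's English description precedes it below -/
import Mathlib

section
/- Let T be a closed walk in the constructed path graph P starting and ending at v₁ such that w(T) ≥ W₁ and c(T) ≤ C. Then T traverses every edge of P at least twice, and traverses the edge e_{n+1} exactly twice. -/
open SimpleGraph Finset

/-- The path graph on `n + 2` vertices `v₁, …, v_{n+2}` (indexed by `Fin (n+2)`),
with edges `e_i = {v_i, v_{i+1}}`. -/
def pathG (n : ℕ) : SimpleGraph (Fin (n + 2)) :=
  SimpleGraph.fromRel (fun a b => (a : ℕ) + 1 = (b : ℕ))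

/-- The edge `e_i = {v_i, v_{i+1}}` of the path graph, for `i ∈ [n+1]`. -/
def pedge (n : ℕ) (i : Fin (n + 1)) : Sym2 (Fin (n + 2)) := s(i.castSucc, i.succ)

/-- `φ(T, e_i)`: the number of times the walk `T` traverses the edge `e_i`. -/
def phi {n : ℕ} {u v : Fin (n + 2)} (T : (pathG n).Walk u v) (i : Fin (n + 1)) : ℕ :=
  T.edges.count (pedge n i)

/-- Edge weights: `w(e_i) = f i` for `i ∈ [n]`, and `w(e_{n+1}) = (4Z + 4S)²`. -/
def wFun (n Z : ℕ) (f : Fin n → ℕ) (i : Fin (n + 1)) : ℕ :=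
  if h : (i : ℕ) < n then f ⟨i, h⟩ else (4 * Z + 4 * ∑ j, f j) ^ 2

/-- Edge costs: `c(e_i) = f i` for `i ∈ [n]`, and `c(e_{n+1}) = Z + S`. -/
def cFun (n Z : ℕ) (f : Fin n → ℕ) (i : Fin (n + 1)) : ℕ :=
  if h : (i : ℕ) < n then f ⟨i, h⟩ else Z + ∑ j, f j

/-- The total weight `w(T) = Σ_e φ(T,e)·w(e)` of a tour. -/
def wTour {n : ℕ} (Z : ℕ) (f : Fin n → ℕ) {u v : Fin (n + 2)} (T : (pathG n).Walk u v) : ℕ :=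
  ∑ i, phi T i * wFun n Z f i

/-- The total cost `c(T) = Σ_e φ(T,e)·c(e)` of a tour. -/
def cTour {n : ℕ} (Z : ℕ) (f : Fin n → ℕ) {u v : Fin (n + 2)} (T : (pathG n).Walk u v) : ℕ :=
  ∑ i, phi T i * cFun n Z f i

/-- The cost threshold `C = 4Z + 4S`. -/
def Cthr (n Z : ℕ) (f : Fin n → ℕ) : ℕ := 4 * Z + 4 * ∑ j, f j

/-- The lower weight threshold `W₁ = 2Z + 2(4Z+4S)² + 2S`. -/
def Wthr (n Z : ℕ) (f : Fin n → ℕ) : ℕ :=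
  2 * Z + 2 * (4 * Z + 4 * ∑ j, f j) ^ 2 + 2 * ∑ j, f j

/-! Every edge of a path is a bridge, so a walk crosses `e_i` an odd number of times exactly when
`e_i` separates its endpoints. A tour avoiding `e_{n+1}` would weigh no more than it costs, and
`C < W₁`; so the tour reaches `v_{n+2}`, and its two halves, out to `v_{n+2}` and back, each cross
every edge an odd number of times. Hence every edge is crossed an even, positive number of times,
and crossing `e_{n+1}` four times would already cost `4(Z + S) + 2S > C`. -/

lemma pedge_eq_iff_of_adj {n : ℕ} {a b : Fin (n + 2)} (h : (pathG n).Adj a b) (i : Fin (n + 1)) :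
    s(a, b) = pedge n i ↔ ((i : ℕ) < a ↔ ¬ (i : ℕ) < b) := by
  rw [pathG, fromRel_adj] at h
  rw [pedge, Sym2.eq_iff]
  simp only [Fin.ext_iff, Fin.val_castSucc, Fin.val_succ]
  omega

theorem even_phi_iff {n : ℕ} {u v : Fin (n + 2)} (T : (pathG n).Walk u v) (i : Fin (n + 1)) :
    Even (phi T i) ↔ ((i : ℕ) < u ↔ (i : ℕ) < v) := by
  induction T with
  | nil => simp [phi]
  | @cons a b _ h p ih =>
    have hcross := pedge_eq_iff_of_adj h i
    rw [phi, Walk.edges_cons, List.count_cons, ← phi]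
    simp only [beq_iff_eq]
    by_cases he : s(a, b) = pedge n i
    · rw [if_pos he, Nat.even_add_one, ih]
      have := hcross.mp he
      tauto
    · rw [if_neg he, add_zero, ih]
      have := mt hcross.mpr he
      tauto

lemma phi_append {n : ℕ} {u v w : Fin (n + 2)} (p : (pathG n).Walk u v) (q : (pathG n).Walk v w)
    (i : Fin (n + 1)) : phi (p.append q) i = phi p i + phi q i := by
  simp only [phi, Walk.edges_append, List.count_append]

theorem two_le_phi_of_mem_support {n : ℕ} {u x : Fin (n + 2)} (T : (pathG n).Walk u u)
    (hx : x ∈ T.support) (i : Fin (n + 1)) (hsep : (i : ℕ) < u ↔ ¬ (i : ℕ) < x) :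
    2 ≤ phi T i := by
  have hto : ¬ Even (phi (T.takeUntil x hx) i) := by rw [even_phi_iff]; tauto
  have hback : ¬ Even (phi (T.dropUntil x hx) i) := by rw [even_phi_iff]; tauto
  rw [← T.take_spec hx, phi_append]
  rw [Nat.not_even_iff_odd] at hto hback
  have := hto.pos
  have := hback.pos
  omega

lemma sum_mul_dite_lt {R : Type*} [NonUnitalNonAssocSemiring R] {n : ℕ} (g : Fin (n + 1) → R)
    (f : Fin n → R) (K : R) :
    ∑ i : Fin (n + 1), g i * (if h : (i : ℕ) < n then f ⟨i, h⟩ else K) =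
      ∑ j : Fin n, g j.castSucc * f j + g (Fin.last n) * K := by
  simp [Fin.sum_univ_castSucc]

/-- Any tour `T` rooted at `v₁` with `w(T) ≥ W₁` and `c(T) ≤ C` traverses every
edge of the path at least twice, and the last edge `e_{n+1}` exactly twice. -/
theorem tour_traverses_every_edge_twice (n : ℕ) (hn : 1 ≤ n) (f : Fin n → ℕ)
    (hf : ∀ i, 1 ≤ f i) (Z : ℕ) (T : (pathG n).Walk 0 0)
    (hw : Wthr n Z f ≤ wTour Z f T) (hc : cTour Z f T ≤ Cthr n Z f) :
    (∀ i : Fin (n + 1), 2 ≤ phi T i) ∧ phi T (Fin.last n) = 2 := by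
  simp only [wTour, wFun, cTour, cFun, sum_mul_dite_lt] at hw hc
  unfold Wthr at hw
  unfold Cthr at hc
  set S := ∑ j, f j
  set P := ∑ j : Fin n, phi T j.castSucc * f j
  have hS : 1 ≤ S :=
    (hf ⟨0, hn⟩).trans (single_le_sum (fun j _ => Nat.zero_le (f j)) (mem_univ _))
  have hlast_pos : 0 < phi T (Fin.last n) := by
    by_contra h0
    simp only [not_lt, nonpos_iff_eq_zero] at h0
    rw [h0] at hw hc
    nlinarith
  have hreach : (Fin.last n).succ ∈ T.support :=
    T.snd_mem_support_of_mem_edges (List.count_pos_iff.mp hlast_pos)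
  have htwo (i : Fin (n + 1)) : 2 ≤ phi T i :=
    two_le_phi_of_mem_support T hreach i (by simpa using i.is_le)
  refine ⟨htwo, ?_⟩
  have hP : 2 * S ≤ P := by
    rw [mul_sum]
    exact sum_le_sum fun j _ => Nat.mul_le_mul_right _ (htwo j.castSucc)
  have hlt : phi T (Fin.last n) < 4 := by
    by_contra! h4
    have := Nat.mul_le_mul_right (Z + S) h4
    omega
  obtain ⟨k, hk⟩ := (even_phi_iff T (Fin.last n)).mpr Iff.rfl
  have := htwo (Fin.last n)
  omega
end

section
/- Suppose y : Fin n → ℕ satisfies Σ_i y i · f i = Z. Then there exists a closed walk T in the constructed path graph P starting and ending at v₁ such that φ(T, e_i) = 2·(y i) + 2 for every i ∈ [n], φ(T, e_{n+1}) = 2, w(T) = W₁ and c(T) = C. -/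
open SimpleGraph Finset

/-
The tour walks from `v₁` to `v_{n+2}`, bouncing back and forth `yᵢ` times on each `e_i` before
crossing it, and then walks straight back. So `e_i` is traversed `2yᵢ + 2` times and `e_{n+1}`
twice, and both totals reduce to `2 Σ yᵢ fᵢ + 2S + 2·(value on e_{n+1})` with `Σ yᵢ fᵢ = Z`.
-/

namespace pathG

variable {n : ℕ}

lemma adj_castSucc_succ (i : Fin (n + 1)) : (pathG n).Adj i.castSucc i.succ := by
  rw [pathG, fromRel_adj]
  exact ⟨Fin.castSucc_lt_succ.ne, Or.inl (by simp)⟩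

lemma pedge_injective : Function.Injective (pedge n) := by
  intro i j h
  rcases Sym2.eq_iff.mp h with ⟨h₁, -⟩ | ⟨h₁, h₂⟩
  · exact Fin.castSucc_injective _ h₁
  · have h₁ := congrArg Fin.val h₁
    have h₂ := congrArg Fin.val h₂
    simp only [Fin.val_castSucc, Fin.val_succ] at h₁ h₂
    omega

def bounce (i : Fin (n + 1)) : ℕ → (pathG n).Walk i.castSucc i.castSucc
  | 0 => .nil
  | m + 1 => .cons (adj_castSucc_succ i) (.cons (adj_castSucc_succ i).symm (bounce i m))

lemma edges_bounce (i : Fin (n + 1)) (m : ℕ) :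
    (bounce i m).edges = List.replicate (2 * m) (pedge n i) := by
  induction m with
  | zero => rfl
  | succ m ih =>
    rw [bounce, Walk.edges_cons, Walk.edges_cons, ih, Nat.mul_succ, List.replicate_succ,
      List.replicate_succ]
    exact congrArg (pedge n i :: ·) (congrArg (· :: _) Sym2.eq_swap)

def bouncingWalk (g : Fin (n + 1) → ℕ) :
    (k : ℕ) → (hk : k ≤ n + 1) → (pathG n).Walk 0 ⟨k, by omega⟩
  | 0, _ => .nil
  | k + 1, hk =>
    ((bouncingWalk g k (by omega)).append (bounce ⟨k, by omega⟩ (g ⟨k, by omega⟩))).append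
      (.cons (adj_castSucc_succ ⟨k, by omega⟩) .nil)

lemma count_pedge_bouncingWalk (g : Fin (n + 1) → ℕ) (k : ℕ) (hk : k ≤ n + 1)
    (i : Fin (n + 1)) :
    (bouncingWalk g k hk).edges.count (pedge n i) = if (i : ℕ) < k then 2 * g i + 1 else 0 := by
  induction k with
  | zero => simp [bouncingWalk]
  | succ k ih =>
    have hk' : k < n + 1 := by omega
    rw [bouncingWalk, Walk.edges_append, Walk.edges_append, List.count_append, List.count_append,
      edges_bounce, ih (by omega)]
    change _ + _ + List.count _ [pedge n ⟨k, hk'⟩] = _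
    by_cases hik : i = ⟨k, hk'⟩
    · subst hik
      simp
    · have hne : pedge n i ≠ pedge n ⟨k, hk'⟩ := pedge_injective.ne hik
      have hik' : (i : ℕ) ≠ k := fun h => hik (Fin.ext h)
      simp only [List.count_replicate, List.count_singleton, beq_iff_eq, Ne.symm hne,
        if_false, add_zero]
      split_ifs <;> omega

lemma exists_walk_phi_eq (g : Fin (n + 1) → ℕ) :
    ∃ T : (pathG n).Walk 0 0, ∀ i, phi T i = 2 * g i + 2 := by
  refine ⟨(bouncingWalk g (n + 1) le_rfl).append (bouncingWalk 0 (n + 1) le_rfl).reverse,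
    fun i => ?_⟩
  rw [phi, Walk.edges_append, List.count_append, Walk.edges_reverse, List.count_reverse,
    count_pedge_bouncingWalk, count_pedge_bouncingWalk, if_pos i.isLt, if_pos i.isLt]
  simp

end pathG

section

variable {n : ℕ} (Z : ℕ) (f : Fin n → ℕ)

lemma wTour_eq {u v : Fin (n + 2)} (T : (pathG n).Walk u v) :
    wTour Z f T = ∑ i : Fin n, phi T i.castSucc * f i +
      phi T (Fin.last n) * (4 * Z + 4 * ∑ j, f j) ^ 2 := by
  simp [wTour, wFun, Fin.sum_univ_castSucc]

lemma cTour_eq {u v : Fin (n + 2)} (T : (pathG n).Walk u v) :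
    cTour Z f T = ∑ i : Fin n, phi T i.castSucc * f i + phi T (Fin.last n) * (Z + ∑ j, f j) := by
  simp [cTour, cFun, Fin.sum_univ_castSucc]

end

theorem subset_sum_solution_gives_tour_general (n : ℕ) (f : Fin n → ℕ)
    (Z : ℕ) (y : Fin n → ℕ) (hy : ∑ i, y i * f i = Z) :
    ∃ T : (pathG n).Walk 0 0,
      (∀ i : Fin n, phi T i.castSucc = 2 * y i + 2) ∧
      phi T (Fin.last n) = 2 ∧
      wTour Z f T = Wthr n Z f ∧
      cTour Z f T = Cthr n Z f := by
  obtain ⟨T, hT⟩ := pathG.exists_walk_phi_eq (Fin.snoc y 0 : Fin (n + 1) → ℕ)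
  have hcast : ∀ i : Fin n, phi T i.castSucc = 2 * y i + 2 := by simp [hT]
  have hlast : phi T (Fin.last n) = 2 := by simp [hT]
  have hsum : ∑ i : Fin n, phi T i.castSucc * f i = 2 * Z + 2 * ∑ j, f j := by
    simp only [hcast, add_mul, Finset.sum_add_distrib, mul_assoc, ← Finset.mul_sum, hy]
  refine ⟨T, hcast, hlast, ?_, ?_⟩
  · rw [wTour_eq, hsum, hlast, Wthr]
    ring
  · rw [cTour_eq, hsum, hlast, Cthr]
    ring

/-- From a subset-sum solution `y`, one obtains the "natural" tour traversing
each `e_i` exactly `2·yᵢ + 2` times and `e_{n+1}` exactly twice, with total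
weight exactly `W₁` and total cost exactly `C`. -/
theorem subset_sum_solution_gives_tour (n : ℕ) (hn : 1 ≤ n) (f : Fin n → ℕ)
    (hf : ∀ i, 1 ≤ f i) (Z : ℕ) (y : Fin n → ℕ) (hy : ∑ i, y i * f i = Z) :
    ∃ T : (pathG n).Walk 0 0,
      (∀ i : Fin n, phi T i.castSucc = 2 * y i + 2) ∧
      phi T (Fin.last n) = 2 ∧
      wTour Z f T = Wthr n Z f ∧
      cTour Z f T = Cthr n Z f :=
  subset_sum_solution_gives_tour_general n f Z y hy
end

section
/- Let T be a closed walk in the constructed path graph P starting and ending at v₁, and let y : Fin n → ℕ be such that φ(T, e_i) = 2·(y i) + 2 for every i ∈ [n] and φ(T, e_{n+1}) = 2. If w(T) ≥ W₁ and c(T) ≤ C, then Σ_i y i · f i = Z. (The inequality w(T) ≥ W₁ gives Σ_i y i · f i ≥ Z and the inequality c(T) ≤ C gives Σ_i y i · f i ≤ Z.) -/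
open SimpleGraph Finset

section TourSums

variable {n : ℕ} (Z : ℕ) (f : Fin n → ℕ)

@[simp] lemma wFun_castSucc (i : Fin n) : wFun n Z f i.castSucc = f i := by
  simp [wFun]

@[simp] lemma wFun_last : wFun n Z f (Fin.last n) = (4 * Z + 4 * ∑ j, f j) ^ 2 := by
  simp [wFun]

@[simp] lemma cFun_castSucc (i : Fin n) : cFun n Z f i.castSucc = f i := by
  simp [cFun]

@[simp] lemma cFun_last : cFun n Z f (Fin.last n) = Z + ∑ j, f j := by
  simp [cFun]

lemma sum_mul_eq_of_castSucc_eq_two_mul_add_two {m : Fin (n + 1) → ℕ} {y : Fin n → ℕ}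
    (hm : ∀ i : Fin n, m i.castSucc = 2 * y i + 2) (hlast : m (Fin.last n) = 2)
    (g : Fin (n + 1) → ℕ) :
    ∑ i, m i * g i =
      2 * ∑ i, y i * g i.castSucc + 2 * ∑ i : Fin n, g i.castSucc + 2 * g (Fin.last n) := by
  rw [Fin.sum_univ_castSucc, hlast, mul_sum, mul_sum, ← sum_add_distrib]
  congr 1
  exact sum_congr rfl fun i _ ↦ by rw [hm]; ring

variable {u v : Fin (n + 2)} {T : (pathG n).Walk u v} {y : Fin n → ℕ}

lemma wTour_eq_of_phi (hphi : ∀ i : Fin n, phi T i.castSucc = 2 * y i + 2)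
    (hlast : phi T (Fin.last n) = 2) :
    wTour Z f T =
      2 * ∑ i, y i * f i + 2 * ∑ j, f j + 2 * (4 * Z + 4 * ∑ j, f j) ^ 2 := by
  simpa [wTour] using sum_mul_eq_of_castSucc_eq_two_mul_add_two hphi hlast (wFun n Z f)

lemma cTour_eq_of_phi (hphi : ∀ i : Fin n, phi T i.castSucc = 2 * y i + 2)
    (hlast : phi T (Fin.last n) = 2) :
    cTour Z f T = 2 * ∑ i, y i * f i + 2 * ∑ j, f j + 2 * (Z + ∑ j, f j) := by
  simpa [cTour] using sum_mul_eq_of_castSucc_eq_two_mul_add_two hphi hlast (cFun n Z f)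

end TourSums

theorem tour_gives_subset_sum_solution_general (n : ℕ) (f : Fin n → ℕ)
    (Z : ℕ) (T : (pathG n).Walk 0 0) (y : Fin n → ℕ)
    (hphi : ∀ i : Fin n, phi T i.castSucc = 2 * y i + 2)
    (hlast : phi T (Fin.last n) = 2)
    (hw : Wthr n Z f ≤ wTour Z f T) (hc : cTour Z f T ≤ Cthr n Z f) :
    ∑ i, y i * f i = Z := by
  rw [wTour_eq_of_phi Z f hphi hlast, Wthr] at hw
  rw [cTour_eq_of_phi Z f hphi hlast, Cthr] at hc
  omega

/-- If a tour `T` rooted at `v₁` traverses each `e_i` exactly `2·yᵢ + 2` times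
and `e_{n+1}` exactly twice, and satisfies `w(T) ≥ W₁` and `c(T) ≤ C`, then `y`
is a solution of the subset-sum instance: `Σ_i yᵢ·fᵢ = Z`. -/
theorem tour_gives_subset_sum_solution (n : ℕ) (hn : 1 ≤ n) (f : Fin n → ℕ)
    (hf : ∀ i, 1 ≤ f i) (Z : ℕ) (T : (pathG n).Walk 0 0) (y : Fin n → ℕ)
    (hphi : ∀ i : Fin n, phi T i.castSucc = 2 * y i + 2)
    (hlast : phi T (Fin.last n) = 2)
    (hw : Wthr n Z f ≤ wTour Z f T) (hc : cTour Z f T ≤ Cthr n Z f) :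
    ∑ i, y i * f i = Z :=
  tour_gives_subset_sum_solution_general n f Z T y hphi hlast hw hc
end
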